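/- Let Q be the n×n tridiagonal matrix with diagonal entries -v_1,...,-v_n (each v_i ≥ 2) and 1's on the super- and sub-diagonals. Then Q is negative definite. -/

import Mathlib

/-!
Write `Q = A - diag v` with `A` the adjacency matrix of the path graph, and split off its
Laplacian `L = diag(deg) - A`: then `xᵀQx = -xᵀLx - ∑ (vᵢ - degᵢ) xᵢ²`. Both terms are
nonnegative because the path has degrees at most `2 ≤ vᵢ`. If the form vanished, `xᵀLx = 0`
would make `x` constant on the connected path, while the endpoint, of degree at most `1 < v₀`,
forces `x₀ = 0`.
-/

open Matrix

/-- The tridiagonal matrix with diagonal entries `-v i` and `1`'s on the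
super- and sub-diagonal. -/
def triQ {n : ℕ} (v : Fin n → ℤ) : Matrix (Fin n) (Fin n) ℝ :=
  Matrix.of fun i j =>
    if i = j then -(v i : ℝ)
    else if (i : ℕ) + 1 = (j : ℕ) ∨ (j : ℕ) + 1 = (i : ℕ) then 1 else 0

namespace SimpleGraph

variable {V : Type*} [Fintype V] [DecidableEq V] {G : SimpleGraph V} [DecidableRel G.Adj]

theorem adjMatrix_sub_diagonal_eq (d : V → ℝ) :
    G.adjMatrix ℝ - diagonal d = -G.lapMatrix ℝ - diagonal (fun i => d i - G.degree i) := by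
  rw [lapMatrix, degMatrix, ← diagonal_sub]
  abel

theorem Connected.dotProduct_adjMatrix_sub_diagonal_mulVec_neg (hG : G.Connected) {d : V → ℝ}
    (hd : ∀ i, (G.degree i : ℝ) ≤ d i) {i₀ : V} (hi₀ : (G.degree i₀ : ℝ) < d i₀)
    {x : V → ℝ} (hx : x ≠ 0) : x ⬝ᵥ (G.adjMatrix ℝ - diagonal d) *ᵥ x < 0 := by
  set L := x ⬝ᵥ G.lapMatrix ℝ *ᵥ x
  set S := ∑ i, (d i - G.degree i) * x i * x i
  have hL : 0 ≤ L := (G.posSemidef_lapMatrix ℝ).dotProduct_mulVec_nonneg x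
  have hS : ∀ i ∈ Finset.univ, 0 ≤ (d i - G.degree i) * x i * x i := fun i _ => by
    rw [mul_assoc]; exact mul_nonneg (sub_nonneg.2 (hd i)) (mul_self_nonneg _)
  have hform : x ⬝ᵥ (G.adjMatrix ℝ - diagonal d) *ᵥ x = -L - S := by
    rw [adjMatrix_sub_diagonal_eq, sub_mulVec, neg_mulVec, dotProduct_sub, dotProduct_neg]
    exact congrArg _ (Finset.sum_congr rfl fun i _ => by rw [mulVec_diagonal]; ring)
  rw [hform]
  by_contra! hnonneg
  have hL0 : L = 0 := by linarith [Finset.sum_nonneg hS]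
  have hS0 : S = 0 := by linarith [Finset.sum_nonneg hS]
  have hconst : ∀ i, x i = x i₀ :=
    fun i => (G.lapMatrix_toLinearMap₂'_apply'_eq_zero_iff_forall_reachable x).1
      (by rwa [toLinearMap₂'_apply']) i i₀ (hG.preconnected i i₀)
  have hxi₀ : x i₀ = 0 := by
    have := (Finset.sum_eq_zero_iff_of_nonneg hS).1 hS0 i₀ (Finset.mem_univ _)
    rw [mul_assoc] at this
    simpa [(sub_pos.2 hi₀).ne'] using this
  exact hx (funext fun i => (hconst i).trans hxi₀)

instance (n : ℕ) : DecidableRel (pathGraph n).Adj :=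
  fun _ _ => decidable_of_iff _ pathGraph_adj.symm

theorem pathGraph_degree_le_two {n : ℕ} (i : Fin n) : (pathGraph n).degree i ≤ 2 := by
  have hsub : ((pathGraph n).neighborFinset i).map Fin.valEmbedding ⊆
      {(i : ℕ) - 1, (i : ℕ) + 1} := by
    intro k
    simp only [Finset.mem_map, mem_neighborFinset, pathGraph_adj, Fin.valEmbedding_apply,
      Finset.mem_insert, Finset.mem_singleton]
    omega
  rw [← card_neighborFinset_eq_degree, ← Finset.card_map]
  exact (Finset.card_le_card hsub).trans Finset.card_le_two

theorem pathGraph_degree_zero_le_one (n : ℕ) : (pathGraph (n + 1)).degree 0 ≤ 1 := by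
  have hsub : ((pathGraph (n + 1)).neighborFinset 0).map Fin.valEmbedding ⊆ {1} := by
    intro k
    simp only [Finset.mem_map, mem_neighborFinset, pathGraph_adj, Fin.valEmbedding_apply,
      Finset.mem_singleton, Fin.val_zero]
    omega
  rw [← card_neighborFinset_eq_degree, ← Finset.card_map]
  exact Finset.card_le_card hsub

end SimpleGraph

open SimpleGraph

theorem triQ_eq_adjMatrix_pathGraph_sub_diagonal {n : ℕ} (v : Fin n → ℤ) :
    triQ v = (pathGraph n).adjMatrix ℝ - diagonal fun i => (v i : ℝ) := by
  ext i j
  by_cases h : i = j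
  · subst h; simp [triQ]
  · simp [triQ, h, pathGraph_adj, eq_comm]

/-- `Q` is negative definite: `xᵀQx < 0` for all nonzero real vectors `x`. -/
theorem stmt4 {n : ℕ} (v : Fin n → ℤ) (hv : ∀ i, 2 ≤ v i) :
    ∀ x : Fin n → ℝ, x ≠ 0 → x ⬝ᵥ (triQ v).mulVec x < 0 := by
  intro x hx
  obtain ⟨m, rfl⟩ : ∃ m, n = m + 1 :=
    Nat.exists_eq_succ_of_ne_zero (by rintro rfl; exact hx (Subsingleton.elim _ _))
  have hv' : ∀ i, (2 : ℝ) ≤ v i := fun i => by exact_mod_cast hv i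
  rw [triQ_eq_adjMatrix_pathGraph_sub_diagonal]
  refine (pathGraph_connected m).dotProduct_adjMatrix_sub_diagonal_mulVec_neg (i₀ := 0)
    (fun i => ?_) ?_ hx
  · exact (Nat.cast_le.2 (pathGraph_degree_le_two i)).trans (hv' i)
  · calc ((pathGraph (m + 1)).degree 0 : ℝ) ≤ 1 := mod_cast pathGraph_degree_zero_le_one m
      _ < 2 := one_lt_two
      _ ≤ v 0 := hv' 0
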